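/- Let 0 ≤ x < x+h < 1 with binary expansions x = Σ 2^{-k}ε_k, x+h = Σ 2^{-k}ε'_k (terminating expansion chosen for dyadic rationals), let p be the integer with 2^{-p-1} < h ≤ 2^{-p}, and let k_0 = max{k : ε_j = ε'_j for all j ≤ k} (k_0 = 0 if ε_1 ≠ ε'_1). If k_0 < p, then Σ_{k=p+1}^∞ 2^{-k}(1 - ε_k - ε'_k) ≤ h; and moreover if m ≥ 0 is such that ε_{p+m+1} = 0, then Σ_{k=p+1}^∞ 2^{-k}(1 - ε_k - ε'_k) ≥ -h(1 - 2^{-m}). -/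

import Mathlib

/-!
For `y ≥ 0` the tail `∑_{k > p} ε_k(y) 2^{-k}` equals `fract (2^p y) / 2^p`, so the sum in question
is `(1 - u - v) / 2^p` with `u = fract (2^p x)` and `v = fract (2^p (x + h))`. Since the digits
of `x` and `x + h` differ at a position `≤ p`, the floors of `2^p x` and `2^p (x + h)` differ,
and as `2^p h ≤ 1` this forces `v = u + 2^p h - 1`. The upper bound is then `v ≥ 0`; for the lower
bound, a zero digit `ε_{p+m+1}` forces `1 - u > 2^{-m-1}`.
-/

open Filter Topology Set

/-- The `k`-th binary digit of `x` (for `k ≥ 1`), using the terminating (eventually zero)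
expansion for dyadic rationals. -/
noncomputable def binDigit (x : ℝ) (k : ℕ) : ℕ := ⌊x * 2^k⌋.toNat % 2

lemma floor_mul_two_pow_of_le (y : ℝ) {j p : ℕ} (hjp : j ≤ p) :
    ⌊y * 2 ^ j⌋ = ⌊y * 2 ^ p⌋ / 2 ^ (p - j) := by
  have h := Int.floor_div_natCast (y * 2 ^ p) (2 ^ (p - j))
  push_cast at h
  rw [← h, ← pow_sub_mul_pow 2 hjp]
  field_simp

lemma fract_add_of_floor_ne {a b : ℝ} (hb0 : 0 ≤ b) (hb1 : b ≤ 1) (hne : ⌊a⌋ ≠ ⌊a + b⌋) :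
    Int.fract (a + b) = Int.fract a + b - 1 := by
  have hle : ⌊a⌋ ≤ ⌊a + b⌋ := Int.floor_le_floor (by linarith)
  have hle' : ⌊a + b⌋ ≤ ⌊a⌋ + 1 := by
    rw [← Int.floor_add_one]; exact Int.floor_le_floor (by linarith)
  have hsucc : ⌊a + b⌋ = ⌊a⌋ + 1 := by omega
  rw [← Int.self_sub_floor, ← Int.self_sub_floor, hsucc]
  push_cast; ring

lemma half_pow_succ_lt_one_sub_of_digits_eq_zero {t : ℝ} (ht : t ∈ Ico 0 1) {m : ℕ}
    (hm : (Real.digits t 2 m : ℕ) = 0) : (1 / 2 : ℝ) ^ (m + 1) < 1 - t := by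
  set N := ⌊t * 2 ^ (m + 1)⌋₊
  have heven : N % 2 = 0 := by simpa [Real.digits] using hm
  have hlt : N < 2 ^ (m + 1) := by
    rw [Nat.floor_lt (mul_nonneg ht.1 (by positivity))]; push_cast
    nlinarith [ht.2, pow_pos (two_pos : (0:ℝ) < 2) (m + 1)]
  have hle : N + 2 ≤ 2 ^ (m + 1) := by rw [pow_succ] at hlt ⊢; omega
  have hleR : (N : ℝ) + 2 ≤ 2 ^ (m + 1) := by exact_mod_cast hle
  have hfloor : t * 2 ^ (m + 1) < N + 1 := Nat.lt_floor_add_one _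
  rw [one_div_pow, div_lt_iff₀ (by positivity)]
  linarith

lemma binDigit_mul_two_pow (y : ℝ) (p k : ℕ) : binDigit (y * 2 ^ p) k = binDigit y (p + k) := by
  rw [binDigit, binDigit, mul_assoc, ← pow_add]

lemma binDigit_eq_of_floor_eq {y z : ℝ} {j p : ℕ} (hjp : j ≤ p)
    (hf : ⌊y * 2 ^ p⌋ = ⌊z * 2 ^ p⌋) : binDigit y j = binDigit z j := by
  rw [binDigit, binDigit, floor_mul_two_pow_of_le y hjp, floor_mul_two_pow_of_le z hjp, hf]

lemma binDigit_succ_eq_digits_fract {y : ℝ} (hy : 0 ≤ y) (n : ℕ) :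
    binDigit y (n + 1) = (Real.digits (Int.fract y) 2 n : ℕ) := by
  have hshift : Int.fract y * 2 ^ (n + 1) = y * 2 ^ (n + 1) - ((2 * (⌊y⌋ * 2 ^ n) : ℤ) : ℝ) := by
    rw [← Int.self_sub_floor]; push_cast; ring
  have hfloor : ⌊Int.fract y * 2 ^ (n + 1)⌋ = ⌊y * 2 ^ (n + 1)⌋ - 2 * (⌊y⌋ * 2 ^ n) := by
    rw [hshift, Int.floor_sub_intCast]
  have hfract : 0 ≤ ⌊Int.fract y * 2 ^ (n + 1)⌋ :=
    Int.floor_nonneg.2 (mul_nonneg (Int.fract_nonneg y) (by positivity))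
  have hy0 : 0 ≤ ⌊y⌋ * 2 ^ n := mul_nonneg (Int.floor_nonneg.2 hy) (by positivity)
  rw [binDigit, Real.digits, Fin.val_ofNat, ← Int.floor_toNat, Nat.cast_ofNat, hfloor]
  rw [hfloor] at hfract
  omega

lemma hasSum_binDigit_tail {y : ℝ} (hy : 0 ≤ y) (p : ℕ) :
    HasSum (fun k ↦ (binDigit y (p + 1 + k) : ℝ) / 2 ^ (p + 1 + k))
      (Int.fract (y * 2 ^ p) / 2 ^ p) := by
  have hterm (k : ℕ) : (binDigit y (p + 1 + k) : ℝ) / 2 ^ (p + 1 + k)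
      = Real.ofDigitsTerm (Real.digits (Int.fract (y * 2 ^ p)) 2) k / 2 ^ p := by
    rw [Real.ofDigitsTerm, add_assoc, add_comm 1 k, ← binDigit_mul_two_pow,
      binDigit_succ_eq_digits_fract (by positivity), pow_add]
    push_cast
    field_simp
  simpa only [hterm] using (Real.hasSum_ofDigitsTerm_digits (Int.fract (y * 2 ^ p)) one_lt_two
    ⟨Int.fract_nonneg _, Int.fract_lt_one _⟩).div_const (2 ^ p)

lemma hasSum_one_sub_binDigit_sub_binDigit {y z : ℝ} (hy : 0 ≤ y) (hz : 0 ≤ z) (p : ℕ) :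
    HasSum (fun k ↦ (1 - (binDigit y (p + 1 + k) : ℝ) - binDigit z (p + 1 + k)) / 2 ^ (p + 1 + k))
      ((1 - Int.fract (y * 2 ^ p) - Int.fract (z * 2 ^ p)) / 2 ^ p) := by
  have hgeom : HasSum (fun k ↦ (1 : ℝ) / 2 ^ (p + 1 + k)) (1 / 2 ^ p) := by
    convert hasSum_geometric_two' (1 / 2 ^ p) using 2 with k
    rw [pow_add, pow_succ]; field_simp
  simp only [sub_div]
  exact (hgeom.sub (hasSum_binDigit_tail hy p)).sub (hasSum_binDigit_tail hz p)

theorem key_inequality_general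
    (x h : ℝ) (hx0 : 0 ≤ x) (hh : 0 < h)
    (p : ℕ) (hp2 : h ≤ (1/2 : ℝ)^p)
    (k0 : ℕ)
    (hk0diff : binDigit x (k0+1) ≠ binDigit (x + h) (k0+1))
    (hk0p : k0 < p) :
    (∑' k : ℕ, (1 - (binDigit x (p+1+k) : ℝ) - (binDigit (x + h) (p+1+k) : ℝ))
        / 2^(p+1+k)) ≤ h ∧
    ∀ m : ℕ, binDigit x (p+m+1) = 0 →
      -h * (1 - (1/2 : ℝ)^m) ≤
        ∑' k : ℕ, (1 - (binDigit x (p+1+k) : ℝ) - (binDigit (x + h) (p+1+k) : ℝ))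
          / 2^(p+1+k) := by
  have h2p : (0 : ℝ) < 2 ^ p := by positivity
  have hh2p : h * 2 ^ p ≤ 1 := by
    calc h * 2 ^ p ≤ (1 / 2) ^ p * 2 ^ p := by gcongr
      _ = 1 := by rw [← mul_pow]; norm_num
  have hfloor_ne : ⌊x * 2 ^ p⌋ ≠ ⌊x * 2 ^ p + h * 2 ^ p⌋ := by
    rw [← add_mul]; exact fun hf ↦ hk0diff (binDigit_eq_of_floor_eq hk0p hf)
  have hfract := fract_add_of_floor_ne (by positivity) hh2p hfloor_ne
  rw [(hasSum_one_sub_binDigit_sub_binDigit hx0 (by positivity) p).tsum_eq, add_mul, hfract]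
  constructor
  · rw [div_le_iff₀ h2p]
    linarith [Int.fract_nonneg (x * 2 ^ p + h * 2 ^ p)]
  · intro m hm
    rw [add_assoc, ← binDigit_mul_two_pow, binDigit_succ_eq_digits_fract (by positivity)] at hm
    have hu := half_pow_succ_lt_one_sub_of_digits_eq_zero
      ⟨Int.fract_nonneg (x * 2 ^ p), Int.fract_lt_one _⟩ hm
    have hscaled : h * 2 ^ p * (1 / 2) ^ m ≤ 2 * (1 / 2) ^ (m + 1) :=
      calc h * 2 ^ p * (1 / 2) ^ m ≤ (1 / 2) ^ m := mul_le_of_le_one_left (by positivity) hh2p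
        _ = 2 * (1 / 2) ^ (m + 1) := by ring
    rw [le_div_iff₀ h2p]
    linarith

theorem key_inequality
    (x h : ℝ) (hx0 : 0 ≤ x) (hh : 0 < h) (hx1 : x + h < 1)
    (p : ℕ) (hp1 : (1/2 : ℝ)^(p+1) < h) (hp2 : h ≤ (1/2 : ℝ)^p)
    (k0 : ℕ)
    (hk0agree : ∀ j : ℕ, 1 ≤ j → j ≤ k0 → binDigit x j = binDigit (x + h) j)
    (hk0diff : binDigit x (k0+1) ≠ binDigit (x + h) (k0+1))
    (hk0p : k0 < p) :
    (∑' k : ℕ, (1 - (binDigit x (p+1+k) : ℝ) - (binDigit (x + h) (p+1+k) : ℝ))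
        / 2^(p+1+k)) ≤ h ∧
    ∀ m : ℕ, binDigit x (p+m+1) = 0 →
      -h * (1 - (1/2 : ℝ)^m) ≤
        ∑' k : ℕ, (1 - (binDigit x (p+1+k) : ℝ) - (binDigit (x + h) (p+1+k) : ℝ))
          / 2^(p+1+k) :=
  key_inequality_general x h hx0 hh p hp2 k0 hk0diff hk0p
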